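/- For every positive integer n, the polynomial D_n(t) = t^9 - (n+3)t^8 - (n-4)t^7 + (2n-8)t^6 + (2n+8)t^5 + (2n-8)t^4 - (2n-11)t^3 + (3n-5)t^2 + (3n+4)t - 4(n+1) has exactly one real root in the interval (2, ∞). -/

import Mathlib

/-!
Write `D_n = A - n B` with `A = D_0` and `B` independent of `n`. On `[2, ∞)` the polynomial `B` is
positive and the Wronskian `A' B - A B'` is positive (both are polynomials in `t - 2` with positive
coefficients), so `A / B` is strictly increasing there. The roots of `D_n` in `(2, ∞)` are the
solutions of `A / B = n`, hence there is at most one; since `D_n(2) < 0 < D_n(n + 4)`, there is one.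
-/

open Polynomial

/-- The denominator polynomial `D_n(t)`, over `ℝ`. -/
noncomputable def Dpoly (n : ℕ) : Polynomial ℝ :=
  X ^ 9 - C ((n : ℝ) + 3) * X ^ 8 - C ((n : ℝ) - 4) * X ^ 7 + C (2 * (n : ℝ) - 8) * X ^ 6
    + C (2 * (n : ℝ) + 8) * X ^ 5 + C (2 * (n : ℝ) - 8) * X ^ 4 - C (2 * (n : ℝ) - 11) * X ^ 3
    + C (3 * (n : ℝ) - 5) * X ^ 2 + C (3 * (n : ℝ) + 4) * X - C (4 * ((n : ℝ) + 1))

open Set NNReal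

theorem Polynomial.strictMonoOn_eval_div_eval {p q : ℝ[X]} {a : ℝ}
    (hq : ∀ t ∈ Ici a, 0 < q.eval t)
    (hW : ∀ t ∈ Ioi a, 0 < p.derivative.eval t * q.eval t - p.eval t * q.derivative.eval t) :
    StrictMonoOn (fun t => p.eval t / q.eval t) (Ici a) := by
  refine strictMonoOn_of_deriv_pos (convex_Ici a)
    (p.continuousOn.div q.continuousOn fun t ht => (hq t ht).ne') fun t ht => ?_
  rw [interior_Ici] at ht
  have hqt := hq t (mem_Ici_of_Ioi ht)
  rw [((p.hasDerivAt t).fun_div (q.hasDerivAt t) hqt.ne').deriv]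
  exact div_pos (hW t ht) (by positivity)

theorem exists_nnreal_eq_add {a t : ℝ} (h : a ≤ t) : ∃ s : ℝ≥0, t = a + s :=
  ⟨(t - a).toNNReal, by rw [Real.coe_toNNReal _ (sub_nonneg.2 h)]; ring⟩

namespace Dpoly

noncomputable def base : ℝ[X] :=
  X^9 - 3*X^8 + 4*X^7 - 8*X^6 + 8*X^5 - 8*X^4 + 11*X^3 - 5*X^2 + 4*X - 4

noncomputable def slope : ℝ[X] :=
  X^8 + X^7 - 2*X^6 - 2*X^5 - 2*X^4 + 2*X^3 - 3*X^2 - 3*X + 4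

theorem eval_eq (n : ℕ) (t : ℝ) : (Dpoly n).eval t = base.eval t - n * slope.eval t := by
  simp [Dpoly, base, slope]; ring

theorem slope_pos {t : ℝ} (ht : 2 ≤ t) : 0 < slope.eval t := by
  obtain ⟨s, rfl⟩ := exists_nnreal_eq_add ht
  have : slope.eval (2 + s : ℝ) = 162 + 873*s + 1785*s^2 + 1938*s^3 + 1258*s^4
      + 506*s^5 + 124*s^6 + 17*s^7 + s^8 := by
    simp [slope]; ring
  rw [this]; positivity

theorem wronskian_pos {t : ℝ} (ht : 2 ≤ t) :
    0 < base.derivative.eval t * slope.eval t - base.eval t * slope.derivative.eval t := by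
  obtain ⟨s, rfl⟩ := exists_nnreal_eq_add ht
  have : base.derivative.eval (2 + s : ℝ) * slope.eval (2 + s : ℝ)
      - base.eval (2 + s : ℝ) * slope.derivative.eval (2 + s : ℝ)
      = 46944 + 364836*s + 1387683*s^2 + 3367478*s^3 + 5760617*s^4
        + 7312076*s^5 + 7096228*s^6 + 5358404*s^7 + 3175630*s^8
        + 1479256*s^9 + 538750*s^10 + 151492*s^11 + 32172*s^12
        + 4976*s^13 + 527*s^14 + 34*s^15 + s^16 := by
    simp [base, slope]; ring
  rw [this]; positivity

theorem ratio_strictMonoOn : StrictMonoOn (fun t => base.eval t / slope.eval t) (Ici 2) :=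
  strictMonoOn_eval_div_eval (fun _ ht => slope_pos ht) fun _ ht => wronskian_pos ht.le

theorem ratio_eq_of_isRoot {n : ℕ} {t : ℝ} (ht : 2 ≤ t) (hroot : (Dpoly n).IsRoot t) :
    base.eval t / slope.eval t = n := by
  rw [IsRoot, eval_eq, sub_eq_zero] at hroot
  rw [hroot, mul_div_cancel_right₀ _ (slope_pos ht).ne']

theorem eval_two (n : ℕ) : (Dpoly n).eval 2 = -56 - 162 * n := by
  simp [Dpoly]; ring

theorem eval_add_four (n : ℕ) :
    (Dpoly n).eval (n + 4 : ℝ) = 268 + 1572 * (n + 2) + 3206 * (n + 2) ^ 2 + 3318 * (n + 2) ^ 3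
      + 1962 * (n + 2) ^ 4 + 674 * (n + 2) ^ 5 + 126 * (n + 2) ^ 6
      + 10 * (n + 2) ^ 7 := by
  simp [Dpoly]; ring

theorem exists_isRoot_gt_two (n : ℕ) : ∃ t : ℝ, 2 < t ∧ (Dpoly n).IsRoot t := by
  have hn : (0 : ℝ) ≤ n := n.cast_nonneg
  have hsign : (0 : ℝ) ∈ Ioo ((Dpoly n).eval 2) ((Dpoly n).eval (n + 4 : ℝ)) :=
    ⟨by rw [eval_two]; linarith, by rw [eval_add_four]; positivity⟩
  obtain ⟨t, ht, hroot⟩ :=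
    intermediate_value_Ioo (by linarith) (Dpoly n).continuousOn hsign
  exact ⟨t, ht.1, hroot⟩

end Dpoly

theorem stmt_3_general (n : ℕ) :
    ∃! t : ℝ, 2 < t ∧ (Dpoly n).IsRoot t := by
  obtain ⟨t, ht, hroot⟩ := Dpoly.exists_isRoot_gt_two n
  refine ⟨t, ⟨ht, hroot⟩, ?_⟩
  rintro y ⟨hy, hyroot⟩
  refine Dpoly.ratio_strictMonoOn.injOn (mem_Ici.2 hy.le) (mem_Ici.2 ht.le) ?_
  simp only [Dpoly.ratio_eq_of_isRoot hy.le hyroot, Dpoly.ratio_eq_of_isRoot ht.le hroot]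

theorem stmt_3 (n : ℕ) (hn : 0 < n) :
    ∃! t : ℝ, 2 < t ∧ (Dpoly n).IsRoot t :=
  stmt_3_general n
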